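/- Let X, Y, Z be positive semidefinite Hermitian n×n matrices such that the decreasing eigenvalue sequence of Y is weakly sub-majorized by that of Z, and Z is diagonal with decreasing diagonal entries. Then trace(X·Y) ≤ trace(X↓·Z), where X↓ is the diagonal matrix whose diagonal is the decreasing eigenvalue sequence of X. -/

import Mathlib

/-!
Write `X = U diag(ξ) U*` and `Y = V diag(η) V*`. Then `Re tr(XY) = ∑ₖₗ |Nₖₗ|² ξₖ ηₗ` with
`N = U* V` unitary, so the weights `|Nₖₗ|²` form a doubly stochastic matrix. By Birkhoff's theorem
this bilinear expression, written in the sorted eigenvalues `x` and `y`, is a convex combination of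
the sums `∑ₖ xₖ y_{π k}` over permutations `π`, each bounded by `∑ₖ xₖ yₖ` by the rearrangement
inequality. Finally, Abel summation against the
decreasing nonnegative weights `xₖ` turns the partial-sum inequalities `y ≺_w z` into
`∑ₖ xₖ yₖ ≤ ∑ₖ xₖ zₖ`.
-/

open ComplexOrder Matrix Finset

theorem Finset.sum_mul_le_sum_mul_of_partial_sums_le {ι R : Type*} [LinearOrder ι] [CommRing R]
    [LinearOrder R] [IsStrictOrderedRing R] {s : Finset ι} {x y z : ι → R}
    (hx : AntitoneOn x s) (hx0 : ∀ i ∈ s, 0 ≤ x i)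
    (hyz : ∀ k ∈ s, ∑ i ∈ s with i ≤ k, y i ≤ ∑ i ∈ s with i ≤ k, z i) :
    ∑ i ∈ s, x i * y i ≤ ∑ i ∈ s, x i * z i := by
  induction s using Finset.induction_on_max generalizing x with
  | empty => simp
  | insert a s hlt ih =>
    have has : a ∉ s := fun h => lt_irrefl a (hlt a h)
    -- `x a` is the smallest weight: split it off as a multiple of the full sum
    have split : ∀ w : ι → R, ∑ i ∈ insert a s, x i * w i
        = ∑ i ∈ s, (x i - x a) * w i + x a * ∑ i ∈ insert a s, w i := by
      intro w
      simp only [sum_insert has, sub_mul, sum_sub_distrib, mul_add, mul_sum]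
      ring
    have hxa : ∀ i ∈ s, x a ≤ x i := fun i hi =>
      hx (mem_insert_of_mem hi) (mem_insert_self a s) (hlt i hi).le
    have hyz_s : ∀ k ∈ s, ∑ i ∈ s with i ≤ k, y i ≤ ∑ i ∈ s with i ≤ k, z i := by
      intro k hk
      have := hyz k (mem_insert_of_mem hk)
      rwa [filter_insert, if_neg (hlt k hk).not_ge] at this
    have hyz_a : ∑ i ∈ insert a s, y i ≤ ∑ i ∈ insert a s, z i := by
      have := hyz a (mem_insert_self a s)
      rwa [filter_true_of_mem fun i hi => (mem_insert.1 hi).elim le_of_eq fun h => (hlt i h).le]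
        at this
    rw [split y, split z]
    refine add_le_add (ih (fun i hi j hj hij => ?_) (fun i hi => sub_nonneg.2 (hxa i hi)) hyz_s)
      (mul_le_mul_of_nonneg_left hyz_a (hx0 a (mem_insert_self a s)))
    exact sub_le_sub_right (hx (mem_insert_of_mem hi) (mem_insert_of_mem hj) hij) _

namespace Matrix

section DoublyStochastic

variable {R n m : Type*} [Fintype n] [DecidableEq n]

theorem submatrix_mem_doublyStochastic [Semiring R] [PartialOrder R] [IsOrderedRing R]
    [Fintype m] [DecidableEq m] {M : Matrix n n R} (hM : M ∈ doublyStochastic R n)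
    (e₁ e₂ : m ≃ n) : M.submatrix e₁ e₂ ∈ doublyStochastic R m := by
  rw [mem_doublyStochastic_iff_sum] at hM ⊢
  obtain ⟨h0, hrow, hcol⟩ := hM
  refine ⟨fun i j => h0 _ _, fun i => ?_, fun j => ?_⟩
  · simpa using (e₂.sum_comp (M (e₁ i))).trans (hrow (e₁ i))
  · simpa using (e₁.sum_comp (M · (e₂ j))).trans (hcol (e₂ j))

theorem dotProduct_mulVec_le_of_mem_doublyStochastic [Field R] [LinearOrder R]
    [IsStrictOrderedRing R] {M : Matrix n n R} (hM : M ∈ doublyStochastic R n) {x y : n → R}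
    (hxy : Monovary x y) : x ⬝ᵥ (M *ᵥ y) ≤ x ⬝ᵥ y := by
  obtain ⟨w, hw0, hw1, rfl⟩ := exists_eq_sum_perm_of_mem_doublyStochastic hM
  simp_rw [sum_mulVec, dotProduct_sum, smul_mulVec, dotProduct_smul, permMatrix_mulVec]
  calc ∑ σ, w σ • (x ⬝ᵥ (y ∘ σ)) ≤ ∑ σ, w σ • (x ⬝ᵥ y) :=
        sum_le_sum fun σ _ => smul_le_smul_of_nonneg_left hxy.sum_mul_comp_perm_le_sum_mul (hw0 σ)
    _ = x ⬝ᵥ y := by rw [← sum_smul, hw1, one_smul]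

end DoublyStochastic

section EntrywiseNormSq

variable {𝕜 m n : Type*} [RCLike 𝕜]

def entrywiseNormSq (U : Matrix m n 𝕜) : Matrix m n ℝ := of fun i j => ‖U i j‖ ^ 2

@[simp]
theorem entrywiseNormSq_apply (U : Matrix m n 𝕜) (i : m) (j : n) :
    entrywiseNormSq U i j = ‖U i j‖ ^ 2 := rfl

variable [Fintype n] [DecidableEq n]

theorem entrywiseNormSq_mem_doublyStochastic {U : Matrix n n 𝕜} (hU : U ∈ unitaryGroup n 𝕜) :
    entrywiseNormSq U ∈ doublyStochastic ℝ n := by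
  have row_sum : ∀ {V : Matrix n n 𝕜}, V * star V = 1 → ∀ i, ∑ j, ‖V i j‖ ^ 2 = 1 := by
    intro V hV i
    have := congr_fun₂ hV i i
    simp only [mul_apply, star_apply, one_apply_eq, RCLike.star_def, RCLike.mul_conj] at this
    exact_mod_cast this
  refine mem_doublyStochastic_iff_sum.2
    ⟨fun i j => by simp only [entrywiseNormSq_apply]; positivity,
      by simpa using row_sum (mem_unitaryGroup_iff.1 hU), fun j => ?_⟩
  simpa [star_apply] using row_sum (V := star U) (by simpa using mem_unitaryGroup_iff'.1 hU) j

theorem re_trace_diagonal_mul_diagonal_mul_conjTranspose (a b : n → ℝ) (N : Matrix n n 𝕜) :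
    RCLike.re (diagonal (RCLike.ofReal ∘ a) * N * diagonal (RCLike.ofReal ∘ b) * Nᴴ).trace
      = a ⬝ᵥ (entrywiseNormSq N *ᵥ b) := by
  simp only [trace, diag, mul_apply (M := _ * diagonal _), mul_diagonal, diagonal_mul,
    conjTranspose_apply, map_sum, dotProduct, mulVec, entrywiseNormSq_apply, mul_sum,
    Function.comp_apply, RCLike.star_def]
  refine sum_congr rfl fun k _ => sum_congr rfl fun l _ => ?_
  rw [show (a k : 𝕜) * N k l * b l * (starRingEnd 𝕜) (N k l)
      = ((a k * (‖N k l‖ ^ 2 * b l) : ℝ) : 𝕜) by push_cast; rw [← RCLike.mul_conj]; ring,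
    RCLike.ofReal_re]

theorem IsHermitian.re_trace_mul {A B : Matrix n n 𝕜} (hA : A.IsHermitian) (hB : B.IsHermitian) :
    RCLike.re (A * B).trace = hA.eigenvalues ⬝ᵥ
      (entrywiseNormSq (star (hA.eigenvectorUnitary : Matrix n n 𝕜) *
        (hB.eigenvectorUnitary : Matrix n n 𝕜)) *ᵥ
        hB.eigenvalues) := by
  rw [← re_trace_diagonal_mul_diagonal_mul_conjTranspose]
  conv_lhs => rw [hA.spectral_theorem, hB.spectral_theorem]
  simp only [Unitary.conjStarAlgAut_apply]
  rw [conjTranspose_mul, ← star_eq_conjTranspose, ← star_eq_conjTranspose, star_star]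
  simp only [Matrix.mul_assoc]
  rw [trace_mul_comm (hA.eigenvectorUnitary : Matrix n n 𝕜)]
  simp only [Matrix.mul_assoc]

end EntrywiseNormSq

end Matrix

theorem trace_le_of_submajorization_general (n : ℕ) (X Y : Matrix (Fin n) (Fin n) ℂ)
    (hX : X.PosSemidef) (hY : Y.PosSemidef)
    (x y z : Fin n → ℝ)
    (hxa : Antitone x) (hya : Antitone y)
    (hxs : ∃ σ : Equiv.Perm (Fin n), x = hX.1.eigenvalues ∘ σ)
    (hys : ∃ σ : Equiv.Perm (Fin n), y = hY.1.eigenvalues ∘ σ)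
    (hyz : ∀ k : Fin n, ∑ i ∈ Finset.univ.filter (· ≤ k), y i
      ≤ ∑ i ∈ Finset.univ.filter (· ≤ k), z i) :
    (Matrix.trace (X * Y)).re ≤
      (Matrix.trace (Matrix.diagonal (fun i => (x i : ℂ))
        * Matrix.diagonal (fun i => (z i : ℂ)))).re := by
  obtain ⟨σ, rfl⟩ := hxs
  obtain ⟨τ, rfl⟩ := hys
  set C := entrywiseNormSq (star (hX.1.eigenvectorUnitary : Matrix (Fin n) (Fin n) ℂ) *
    (hY.1.eigenvectorUnitary : Matrix (Fin n) (Fin n) ℂ))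
  have hC : C ∈ doublyStochastic ℝ (Fin n) := entrywiseNormSq_mem_doublyStochastic
    (star hX.1.eigenvectorUnitary * hY.1.eigenvectorUnitary).2
  calc (X * Y).trace.re
      = (hX.1.eigenvalues ∘ σ) ⬝ᵥ (C.submatrix σ τ *ᵥ (hY.1.eigenvalues ∘ τ)) := by
        rw [submatrix_mulVec_equiv, Function.comp_assoc, Equiv.self_comp_symm, Function.comp_id,
          comp_equiv_dotProduct_comp_equiv]
        exact hX.1.re_trace_mul hY.1
    _ ≤ (hX.1.eigenvalues ∘ σ) ⬝ᵥ (hY.1.eigenvalues ∘ τ) :=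
        dotProduct_mulVec_le_of_mem_doublyStochastic (submatrix_mem_doublyStochastic hC σ τ)
          (hxa.monovary hya)
    _ ≤ ∑ i, (hX.1.eigenvalues ∘ σ) i * z i :=
        sum_mul_le_sum_mul_of_partial_sums_le (hxa.antitoneOn _)
          (fun i _ => hX.eigenvalues_nonneg (σ i)) fun k _ => hyz k
    _ = _ := by simp [diagonal_mul_diagonal, trace_diagonal]

/-- If the decreasing eigenvalue sequence `y` of `Y` is weakly sub-majorized by the
decreasing diagonal `z` of the diagonal matrix `Z`, then
`trace (X * Y) ≤ trace (X↓ * Z)` where `X↓ = diagonal x` is the Fock rearrangement of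
`X`. -/
theorem trace_le_of_submajorization (n : ℕ) (X Y : Matrix (Fin n) (Fin n) ℂ)
    (hX : X.PosSemidef) (hY : Y.PosSemidef)
    (x y z : Fin n → ℝ)
    (hxa : Antitone x) (hya : Antitone y) (hza : Antitone z) (hz0 : ∀ i, 0 ≤ z i)
    (hxs : ∃ σ : Equiv.Perm (Fin n), x = hX.1.eigenvalues ∘ σ)
    (hys : ∃ σ : Equiv.Perm (Fin n), y = hY.1.eigenvalues ∘ σ)
    (hyz : ∀ k : Fin n, ∑ i ∈ Finset.univ.filter (· ≤ k), y i
      ≤ ∑ i ∈ Finset.univ.filter (· ≤ k), z i) :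
    (Matrix.trace (X * Y)).re ≤
      (Matrix.trace (Matrix.diagonal (fun i => (x i : ℂ))
        * Matrix.diagonal (fun i => (z i : ℂ)))).re :=
  trace_le_of_submajorization_general n X Y hX hY x y z hxa hya hxs hys hyz
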